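/- Let e > 2 and let a, d be coprime nonnegative integers with e ≤ a, and let H be the numerical semigroup generated by the arithmetic sequence a, a+d, a+2d, …, a+(e−1)d. Then H is almost symmetric if and only if a = e or a ≡ 2 (mod e−1). -/

import Mathlib

namespace NumSgp

/-- A numerical semigroup: an additive submonoid of ℕ with finite complement. -/
def IsNumSgp (H : Set ℕ) : Prop :=
  0 ∈ H ∧ (∀ a ∈ H, ∀ b ∈ H, a + b ∈ H) ∧ Hᶜ.Finite

/-- Membership of an integer in (the image in ℤ of) `H ⊆ ℕ`. -/
def memZ (H : Set ℕ) (z : ℤ) : Prop := ∃ n ∈ H, (n : ℤ) = z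

/-- The Frobenius number: the largest integer not in `H`. -/
noncomputable def frob (H : Set ℕ) : ℤ := sSup {z : ℤ | ¬ memZ H z}

/-- The pseudo-Frobenius numbers of `H`. -/
def pseudoFrob (H : Set ℕ) : Set ℤ :=
  {f : ℤ | ¬ memZ H f ∧ ∀ m ∈ H, m ≠ 0 → memZ H (f + (m : ℤ))}

/-- The canonical ideal `Ω_H = {-f + h : f ∈ PF(H), h ∈ H}`. -/
def canIdeal (H : Set ℕ) : Set ℤ :=
  {z : ℤ | ∃ f ∈ pseudoFrob H, ∃ h ∈ H, z = -f + (h : ℤ)}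

/-- The anti-canonical ideal `Ω_H⁻¹ = {x : x + Ω_H ⊆ H}`. -/
def antiCanIdeal (H : Set ℕ) : Set ℤ :=
  {x : ℤ | ∀ w ∈ canIdeal H, memZ H (x + w)}

/-- The trace of `H`: the sumset `Ω_H + Ω_H⁻¹`. -/
def trace (H : Set ℕ) : Set ℤ :=
  {z : ℤ | ∃ w ∈ canIdeal H, ∃ x ∈ antiCanIdeal H, z = w + x}

/-- The conductor ideal `C_H = {x : x > Fr(H)}` (viewed inside ℤ). -/
noncomputable def condIdeal (H : Set ℕ) : Set ℤ := {z : ℤ | frob H < z}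

/-- The residue of `H`: `|H ∖ tr(H)|`. -/
noncomputable def res (H : Set ℕ) : ℕ :=
  Set.ncard {h : ℕ | h ∈ H ∧ (h : ℤ) ∉ trace H}

/-- The number of gaps `g(H)`. -/
noncomputable def gaps (H : Set ℕ) : ℕ := Set.ncard Hᶜ

/-- The number of non-gaps below the Frobenius number, `n(H)`. -/
noncomputable def nongaps (H : Set ℕ) : ℕ :=
  Set.ncard {x : ℕ | x ∈ H ∧ (x : ℤ) < frob H}

/-- `H` is symmetric if for all `x ∈ ℤ`, `x ∈ H` or `Fr(H) - x ∈ H`. -/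
noncomputable def IsSymmetric (H : Set ℕ) : Prop :=
  ∀ z : ℤ, memZ H z ∨ memZ H (frob H - z)

/-- `H` is nearly Gorenstein if `M = H ∖ {0} ⊆ tr(H)`. -/
def NearlyGorenstein (H : Set ℕ) : Prop :=
  ∀ h ∈ H, h ≠ 0 → (h : ℤ) ∈ trace H

/-- The submonoid of ℕ generated by a set. -/
def genBy (A : Set ℕ) : Set ℕ := (AddSubmonoid.closure A : Set ℕ)

end NumSgp

open NumSgp

/-- `H` is almost symmetric: writing `PF(H) = {f 1 < f 2 < … < f τ}`, one has
`f i + f (τ - i) = Fr(H)` for `i = 1, …, ⌊τ/2⌋`. -/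
noncomputable def AlmostSymmetric (H : Set ℕ) : Prop :=
  ∃ (τ : ℕ) (f : ℕ → ℤ), 0 < τ ∧
    (∀ i j : ℕ, 1 ≤ i → i < j → j ≤ τ → f i < f j) ∧
    pseudoFrob H = f '' Set.Icc 1 τ ∧
    ∀ i : ℕ, 1 ≤ i → i ≤ τ / 2 → f i + f (τ - i) = frob H

/-!
Put `k = e - 1` and write `a = q * k + r + 2` with `0 ≤ r < k`. As `gcd(a, d) = 1`, every integer
is uniquely `L * a + m * d` with `0 ≤ m < a`, and it lies in `H` iff `m ≤ L * k`. This gives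
`Fr(H) = q * a + (a - 1) * d` and `PF(H) = {q * a + (q * k + i) * d : 1 ≤ i ≤ r + 1}`, an arithmetic
progression. If `r = 0` the type is one; if `q = 0` the progression is `d, 2d, …, (r + 1) d` with
`Fr(H) = (r + 1) d`, symmetric about `Fr(H) / 2`; if `q, r ≥ 1` the type is at least two but any
two pseudo-Frobenius numbers already sum to more than `Fr(H)`. Finally `q = 0 ↔ a = e` (as
`e ≤ a`) and `r = 0 ↔ a ≡ 2 (mod e - 1)`.
-/

theorem AlmostSymmetric.exists_add_eq_frob {H : Set ℕ} (h : AlmostSymmetric H)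
    (hPF : (pseudoFrob H).Nontrivial) :
    ∃ f ∈ pseudoFrob H, ∃ g ∈ pseudoFrob H, f + g = frob H := by
  obtain ⟨τ, f, hτ, -, hPFeq, hsym⟩ := h
  have hτ2 : 2 ≤ τ := by
    by_contra! hτ2
    obtain rfl : τ = 1 := by omega
    rw [hPFeq, Set.Icc_self, Set.image_singleton] at hPF
    exact Set.not_nontrivial_singleton hPF
  exact ⟨f 1, hPFeq ▸ Set.mem_image_of_mem f ⟨le_rfl, by omega⟩,
    f (τ - 1), hPFeq ▸ Set.mem_image_of_mem f ⟨by omega, by omega⟩, hsym 1 le_rfl (by omega)⟩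

theorem almostSymmetric_of_pseudoFrob_eq_image {H : Set ℕ} {c s : ℤ} {n : ℕ} (hn : 0 < n)
    (hs : 0 < s) (hPF : pseudoFrob H = (fun i : ℕ => c + i * s) '' Set.Icc 1 n)
    (hfrob : 1 < n → 2 * c + n * s = frob H) : AlmostSymmetric H := by
  refine ⟨n, fun i : ℕ => c + i * s, hn, fun i j _ hij _ => ?_, hPF, fun i hi hin => ?_⟩
  · have : (i : ℤ) < j := by exact_mod_cast hij
    dsimp only
    gcongr
  · rw [← hfrob (by omega)]
    push_cast [Nat.cast_sub (by omega : i ≤ n)]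
    ring

theorem exists_eq_mul_add_mul_of_coprime {a d : ℕ} (hcop : a.Coprime d) (ha : 0 < a) (z : ℤ) :
    ∃ (L : ℤ) (m : ℕ), m < a ∧ z = L * a + m * d := by
  obtain ⟨u, v, huv⟩ := Nat.isCoprime_iff_coprime.2 hcop
  have haZ : (0 : ℤ) < a := by exact_mod_cast ha
  have hmod := Int.emod_nonneg (z * v) haZ.ne'
  have hlt := Int.emod_lt_of_pos (z * v) haZ
  refine ⟨z * u + z * v / a * d, (z * v % a).toNat, by omega, ?_⟩
  rw [Int.toNat_of_nonneg hmod]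
  linear_combination (-z) * huv - (d : ℤ) * Int.ediv_mul_add_emod (z * v) a

namespace NumSgp

-- `k` plays the role of `e - 1`.
def arithSeqSgp (a d k : ℕ) : Set ℕ := genBy {x : ℕ | ∃ i < k + 1, x = a + i * d}

section ArithSeqSgp

variable {a d k : ℕ}

theorem add_mul_mem_arithSeqSgp {i : ℕ} (hi : i ≤ k) : a + i * d ∈ arithSeqSgp a d k :=
  AddSubmonoid.subset_closure ⟨i, by omega, rfl⟩

theorem mem_arithSeqSgp_iff {x : ℕ} :
    x ∈ arithSeqSgp a d k ↔ ∃ l m : ℕ, m ≤ l * k ∧ x = l * a + m * d := by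
  constructor
  · intro hx
    induction hx using AddSubmonoid.closure_induction with
    | mem g hg =>
      obtain ⟨i, hi, rfl⟩ := hg
      exact ⟨1, i, by omega, by ring⟩
    | zero => exact ⟨0, 0, Nat.zero_le _, by ring⟩
    | add x y _ _ hx hy =>
      obtain ⟨l₁, m₁, h₁, rfl⟩ := hx
      obtain ⟨l₂, m₂, h₂, rfl⟩ := hy
      exact ⟨l₁ + l₂, m₁ + m₂, by rw [add_mul]; omega, by ring⟩
  · rintro ⟨l, m, hm, rfl⟩
    induction l generalizing m with
    | zero =>
      obtain rfl : m = 0 := by simpa using hm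
      rw [zero_mul, zero_mul, add_zero]
      exact AddSubmonoid.zero_mem _
    | succ l ih =>
      rcases le_or_gt m k with hmk | hmk
      · rw [show (l + 1) * a + m * d = (a + m * d) + (l * a + 0 * d) by ring]
        exact AddSubmonoid.add_mem _ (add_mul_mem_arithSeqSgp hmk) (ih 0 (Nat.zero_le _))
      · obtain ⟨m', rfl⟩ : ∃ m', m = k + m' := ⟨m - k, by omega⟩
        rw [show (l + 1) * a + (k + m') * d = (a + k * d) + (l * a + m' * d) by ring]
        exact AddSubmonoid.add_mem _ (add_mul_mem_arithSeqSgp le_rfl)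
          (ih m' (by rw [add_mul] at hm; omega))

theorem memZ_arithSeqSgp_iff {z : ℤ} :
    memZ (arithSeqSgp a d k) z ↔ ∃ l m : ℕ, m ≤ l * k ∧ z = l * a + m * d := by
  constructor
  · rintro ⟨x, hx, rfl⟩
    obtain ⟨l, m, hm, rfl⟩ := mem_arithSeqSgp_iff.1 hx
    exact ⟨l, m, hm, by push_cast; ring⟩
  · rintro ⟨l, m, hm, rfl⟩
    exact ⟨l * a + m * d, mem_arithSeqSgp_iff.2 ⟨l, m, hm, rfl⟩, by push_cast; ring⟩

/-- Any other representation `l * a + m' * d` of the same integer has `m' = m + t * a` and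
`l = L - t * d` with `t ≥ 0` (coprimality and `m < a`), so `m' ≤ l * k` forces `m ≤ L * k`. -/
theorem memZ_arithSeqSgp_iff_le (hk : 0 < k) (hcop : a.Coprime d) {L : ℤ} {m : ℕ} (hma : m < a) :
    memZ (arithSeqSgp a d k) (L * a + m * d) ↔ (m : ℤ) ≤ L * k := by
  rw [memZ_arithSeqSgp_iff]
  constructor
  · rintro ⟨l, m', hm', heq⟩
    have hdvd : (a : ℤ) ∣ ((m' : ℤ) - m) * d := ⟨L - l, by linear_combination -heq⟩
    obtain ⟨t, ht⟩ := (Nat.isCoprime_iff_coprime.2 hcop).dvd_of_dvd_mul_right hdvd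
    have haZ : (m : ℤ) < a := by exact_mod_cast hma
    have ht0 : 0 ≤ t := by nlinarith
    have hLl : L - l = t * d := by
      apply mul_right_cancel₀ (show (a : ℤ) ≠ 0 by omega)
      linear_combination heq + (d : ℤ) * ht
    have hmm' : (m : ℤ) ≤ m' := by nlinarith
    have hlL : (l : ℤ) * k ≤ L * k := by gcongr; nlinarith
    have hm'Z : (m' : ℤ) ≤ l * k := by exact_mod_cast hm'
    linarith
  · intro h
    have hL : 0 ≤ L := by
      by_contra! hL
      have : L * k < 0 := mul_neg_of_neg_of_pos hL (by exact_mod_cast hk)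
      omega
    lift L to ℕ using hL
    exact ⟨L, m, by exact_mod_cast h, rfl⟩

variable {q r : ℕ}

theorem frob_arithSeqSgp (hk : 0 < k) (hcop : a.Coprime d) (hqr : a = q * k + r + 2)
    (hr : r < k) : frob (arithSeqSgp a d k) = q * a + (a - 1 : ℤ) * d := by
  have hqrZ : (a : ℤ) = q * k + r + 2 := by exact_mod_cast hqr
  apply IsGreatest.csSup_eq
  constructor
  · have h := (memZ_arithSeqSgp_iff_le (L := q) hk hcop (show a - 1 < a by omega)).not.2
    push_cast [Nat.cast_sub (show 1 ≤ a by omega)] at h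
    exact h (by linarith)
  · intro z hz
    obtain ⟨L, m, hma, rfl⟩ := exists_eq_mul_add_mul_of_coprime hcop (by omega) z
    have hLm : L * k < m := not_le.1 ((memZ_arithSeqSgp_iff_le hk hcop hma).not.1 hz)
    have hmaZ : (m : ℤ) < a := by exact_mod_cast hma
    have hLq : L ≤ q := by nlinarith
    nlinarith

theorem pseudoFrob_arithSeqSgp (hk : 0 < k) (hcop : a.Coprime d) (hqr : a = q * k + r + 2)
    (hr : r < k) : pseudoFrob (arithSeqSgp a d k) =
      (fun i : ℕ => (q * a + q * k * d : ℤ) + i * d) '' Set.Icc 1 (r + 1) := by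
  have hqrZ : (a : ℤ) = q * k + r + 2 := by exact_mod_cast hqr
  ext f
  constructor
  · rintro ⟨hf, hfM⟩
    obtain ⟨L, m, hma, rfl⟩ := exists_eq_mul_add_mul_of_coprime hcop (by omega) f
    have hLm : L * k < m := not_le.1 ((memZ_arithSeqSgp_iff_le hk hcop hma).not.1 hf)
    have hmaZ : (m : ℤ) < a := by exact_mod_cast hma
    have hLq : L ≤ q := by nlinarith
    -- Adding the generator `a + j * d` with `j = min k (a - 1 - m)` keeps the normal form.
    have hshift : ∀ j ≤ k, m + j < a → (m + j : ℤ) ≤ (L + 1) * k := fun j hj hmj => by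
      have h := hfM _ (add_mul_mem_arithSeqSgp hj) (by omega)
      rw [show L * a + m * d + ((a + j * d : ℕ) : ℤ) = (L + 1) * a + ((m + j : ℕ) : ℤ) * d by
        push_cast; ring, memZ_arithSeqSgp_iff_le hk hcop hmj] at h
      exact_mod_cast h
    have hqL : q ≤ L := by
      rcases lt_or_ge (m + k) a with hmk | hmk
      · have := hshift k le_rfl hmk
        linarith
      · have := hshift (a - 1 - m) (by omega) (by omega)
        push_cast [Nat.cast_sub (show m ≤ a - 1 by omega), Nat.cast_sub (show 1 ≤ a by omega)]
          at this
        nlinarith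
    obtain rfl : L = q := le_antisymm hLq hqL
    have hmq : q * k < m := by exact_mod_cast hLm
    refine ⟨m - q * k, ⟨by omega, by omega⟩, ?_⟩
    push_cast [Nat.cast_sub hmq.le]
    ring
  · rintro ⟨i, ⟨hi1, hir⟩, rfl⟩
    have hform : (q * a + q * k * d : ℤ) + i * d = q * a + ((q * k + i : ℕ) : ℤ) * d := by
      push_cast; ring
    refine ⟨?_, fun h hh h0 => ?_⟩
    · beta_reduce
      rw [hform, memZ_arithSeqSgp_iff_le hk hcop (by omega)]
      push_cast
      omega
    · obtain ⟨l, μ, hμ, rfl⟩ := mem_arithSeqSgp_iff.1 hh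
      have hl : 1 ≤ l := by
        by_contra! hl
        simp_all
      rw [memZ_arithSeqSgp_iff]
      rcases le_or_gt (q * k + i + μ) ((q + l) * k) with hle | hgt
      · exact ⟨q + l, q * k + i + μ, hle, by push_cast; ring⟩
      -- otherwise trade one `a * d` from the `d`-coefficient into the `a`-coefficient
      · have hlk : k ≤ l * k := Nat.le_mul_of_pos_left k hl
        rw [add_mul] at hgt
        refine ⟨q + l + d, q * k + i + μ - a, ?_, ?_⟩
        · rw [add_mul, add_mul]
          omega
        · push_cast [Nat.cast_sub (show a ≤ q * k + i + μ by omega)]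
          ring

theorem almostSymmetric_arithSeqSgp_iff (hk : 0 < k) (hcop : a.Coprime d)
    (hqr : a = q * k + r + 2) (hr : r < k) :
    AlmostSymmetric (arithSeqSgp a d k) ↔ q = 0 ∨ r = 0 := by
  have hd : 0 < d := Nat.pos_of_ne_zero fun hd => by
    rw [hd, Nat.coprime_zero_right] at hcop
    omega
  have hdZ : (0 : ℤ) < d := by exact_mod_cast hd
  have hqrZ : (a : ℤ) = q * k + r + 2 := by exact_mod_cast hqr
  have hPF := pseudoFrob_arithSeqSgp hk hcop hqr hr
  have hfrob := frob_arithSeqSgp hk hcop hqr hr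
  constructor
  · intro h
    by_contra! ⟨hq, hr0⟩
    have hnontriv : (pseudoFrob (arithSeqSgp a d k)).Nontrivial := by
      rw [hPF]
      refine ⟨_, Set.mem_image_of_mem _ ⟨le_rfl, by omega⟩, _,
        Set.mem_image_of_mem _ ⟨one_le_two, by omega⟩, ?_⟩
      simp only [ne_eq, add_right_inj, mul_eq_mul_right_iff]
      omega
    obtain ⟨f, hf, g, hg, hfg⟩ := h.exists_add_eq_frob hnontriv
    rw [hPF] at hf hg
    obtain ⟨i, ⟨hi, -⟩, rfl⟩ := hf
    obtain ⟨j, ⟨hj, -⟩, rfl⟩ := hg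
    -- for `q ≥ 1` every sum of two pseudo-Frobenius numbers exceeds `q * a + (a - 1) * d`
    have hq' : (1 : ℤ) ≤ q := by exact_mod_cast Nat.one_le_iff_ne_zero.2 hq
    have hqk : (k : ℤ) ≤ q * k := by nlinarith
    have hi' : (1 : ℤ) ≤ i := by exact_mod_cast hi
    have hj' : (1 : ℤ) ≤ j := by exact_mod_cast hj
    beta_reduce at hfg
    rw [hfrob] at hfg
    nlinarith
  · refine fun hqr0 => almostSymmetric_of_pseudoFrob_eq_image (Nat.succ_pos r) hdZ hPF
      fun hr1 => ?_
    obtain rfl : q = 0 := by omega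
    rw [hfrob]
    push_cast
    linear_combination (-(d : ℤ)) * hqrZ

end ArithSeqSgp

end NumSgp

/-- a numerical semigroup generated by an arithmetic sequence
`a, a+d, …, a+(e-1)d` with `gcd(a,d) = 1`, `2 < e ≤ a`, is almost symmetric iff
`a = e` or `a ≡ 2 (mod e-1)`. -/
theorem stmt_4 (e a d : ℕ) (he : 2 < e) (hcop : Nat.Coprime a d) (hea : e ≤ a)
    (H : Set ℕ) (hH : H = genBy {x : ℕ | ∃ i < e, x = a + i * d}) :
    AlmostSymmetric H ↔ (a = e ∨ a ≡ 2 [MOD e - 1]) := by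
  obtain ⟨k, rfl⟩ : ∃ k, e = k + 1 := ⟨e - 1, by omega⟩
  subst hH
  have hk : 0 < k := by omega
  have hdiv : a = k + 1 ↔ (a - 2) / k = 0 := by
    rw [Nat.div_eq_zero_iff]
    omega
  have hmod : a ≡ 2 [MOD k] ↔ (a - 2) % k = 0 := by
    rw [Nat.ModEq.comm, Nat.modEq_iff_dvd' (by omega), Nat.dvd_iff_mod_eq_zero]
  have hqr : a = (a - 2) / k * k + (a - 2) % k + 2 := by
    have := Nat.div_add_mod' (a - 2) k
    omega
  rw [Nat.add_sub_cancel, hdiv, hmod]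
  exact almostSymmetric_arithSeqSgp_iff hk hcop hqr (Nat.mod_lt _ hk)
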